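/- arXiv:1403.2738 — 2 statements merged into one kernel-verified Lean document; each statement's English description precedes it below -/
import Mathlib

section
/- If an infinite binary sequence x is not bi-immune, then x is Tadaki totally predictable. -/
/-! If `x` agrees with a computable `f` on an infinite decidable set `K`, the predictor that on a
prefix of length `n` answers `f n` when `n ∈ K` and withholds otherwise never errs and answers
infinitely often; it does not even read the bits of the prefix. -/

/-- The prefix `x₁ … x_n` of an infinite binary sequence (0-indexed: `x 0, …, x (n-1)`). -/
def pre (x : ℕ → Bool) (n : ℕ) : List Bool := (List.range n).map x

/-- `x` is bi-immune: it contains no infinite computable subsequence, i.e. there is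
no infinite computable set `K` and computable `f` with `f k = x k` for all `k ∈ K`. -/
def BiImmune (x : ℕ → Bool) : Prop :=
  ¬ ∃ K : Set ℕ, K.Infinite ∧ ComputablePred (· ∈ K) ∧
      ∃ f : ℕ → Bool, Computable f ∧ ∀ k ∈ K, f k = x k

/-- `x` is Tadaki totally predictable: there is a total computable
`F : {0,1}* → {0,1,W}` (here `Option Bool`, `none` = W) such that on every prefix
of `x`, `F` either correctly predicts the next bit or withholds, and `F` predicts
on infinitely many prefixes. -/
def TadakiTotallyPredictable (x : ℕ → Bool) : Prop :=
  ∃ F : List Bool → Option Bool, Computable F ∧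
    (∀ n, F (pre x n) = some (x n) ∨ F (pre x n) = none) ∧
    {n : ℕ | F (pre x n) ≠ none}.Infinite

theorem length_pre (x : ℕ → Bool) (n : ℕ) : (pre x n).length = n := by
  simp [pre]

theorem TadakiTotallyPredictable.of_predictor_on_length {x : ℕ → Bool} (g : ℕ → Option Bool)
    (hg : Computable g) (hcorrect : ∀ n, g n = some (x n) ∨ g n = none)
    (hinf : {n : ℕ | g n ≠ none}.Infinite) : TadakiTotallyPredictable x :=
  ⟨g ∘ List.length, hg.comp Computable.list_length,
    by simpa only [Function.comp_apply, length_pre] using hcorrect,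
    by simpa only [Function.comp_apply, length_pre] using hinf⟩

theorem TadakiTotallyPredictable.of_computable_eqOn {x : ℕ → Bool} {K : Set ℕ}
    (hKinf : K.Infinite) (hK : ComputablePred (· ∈ K)) {f : ℕ → Bool} (hf : Computable f)
    (hfx : ∀ k ∈ K, f k = x k) : TadakiTotallyPredictable x := by
  obtain ⟨c, hc, hcK⟩ := ComputablePred.computable_iff.mp hK
  have hmem (n : ℕ) : n ∈ K ↔ c n = true := iff_of_eq (congrFun hcK n)
  refine .of_predictor_on_length (fun n => bif c n then some (f n) else none)
    (hc.cond (Computable.option_some.comp hf) (Computable.const none)) (fun n => ?_) ?_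
  · cases hn : c n <;> simp [hmem, hn, hfx n]
  · convert hKinf using 1
    ext n
    cases hn : c n <;> simp [hmem, hn]

/-- every non-bi-immune sequence is Tadaki totally predictable. -/
theorem not_biImmune_tadakiTotallyPredictable (x : ℕ → Bool) (h : ¬ BiImmune x) :
    TadakiTotallyPredictable x := by
  obtain ⟨K, hKinf, hK, f, hf, hfx⟩ := not_not.mp h
  exact .of_computable_eqOn hKinf hK hf hfx
end

section
/- Let d be the shift map on infinite binary sequences. Define the experiment E_d on a seed x with x₁ = 0: find the least k ≥ 2 with x_{k+1} = 0, output x_{k+2}, and set the new seed to d^k(x). Then for any infinite binary sequence y, starting from the seed x⁽⁰⁾ = 010y₁0y₂0y₃…, the i-th repetition of E_d outputs exactly y_i, and the seed after i repetitions is x⁽ⁱ⁾ = 0y_i0y_{i+1}0y_{i+2}…. -/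
/-- The dyadic shift map on infinite binary sequences. -/
def d (x : ℕ → Bool) : ℕ → Bool := fun n => x (n + 1)

open Classical

/-- The least `k ≥ 2` such that the `(k+1)`-st bit of the seed is `0`
(0-indexed: `x k = false`), when it exists; `0` otherwise. -/
noncomputable def leastK (x : ℕ → Bool) : ℕ :=
  if h : ∃ k, 2 ≤ k ∧ x k = false then Nat.find h else 0

noncomputable section

/-- The output of one run of the experiment `E_d` on seed `x`: the bit `x_{k+2}`
(0-indexed: `x (k+1)`) for `k = leastK x`. -/
def output (x : ℕ → Bool) : Bool := x (leastK x + 1)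

/-- The new seed after one run of `E_d`: `d^k(x)` for `k = leastK x`. -/
def nextSeed (x : ℕ → Bool) : ℕ → Bool := d^[leastK x] x

/-- The seed after `i` repetitions of `E_d`. -/
def seeds (x : ℕ → Bool) (i : ℕ) : ℕ → Bool := nextSeed^[i] x

lemma leastK_eq_two (x : ℕ → Bool) (h2 : x 2 = false) : leastK x = 2 := by
  have h : ∃ k, 2 ≤ k ∧ x k = false := ⟨2, le_refl 2, h2⟩
  rw [leastK, dif_pos h]
  refine (Nat.find_eq_iff h).2 ⟨⟨le_refl 2, h2⟩, ?_⟩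
  rintro m hm ⟨h1, _⟩
  omega

lemma d_two (x : ℕ → Bool) (n : ℕ) : d^[2] x n = x (n + 2) := by
  show d (d x) n = x (n + 2)
  simp [d]

lemma step_lemma (y s : ℕ → Bool) (j : ℕ)
    (hs : ∀ n, s n = if n % 2 = 1 then y ((n - 1) / 2 + j) else false) :
    output s = y (j + 1) ∧
    (∀ n, nextSeed s n = if n % 2 = 1 then y ((n - 1) / 2 + (j + 1)) else false) := by
  have h2 : s 2 = false := by rw [hs]; norm_num
  have hk := leastK_eq_two s h2
  constructor
  · rw [output, hk, hs]; norm_num; congr 1; omega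
  · intro n
    rw [nextSeed, hk, d_two, hs]
    have e : (n + 2) % 2 = n % 2 := by omega
    by_cases hn : n % 2 = 1
    · simp only [e, hn, if_true, reduceIte]
      congr 1; omega
    · simp [e, hn]

/-- starting from the seed `x⁽⁰⁾ = 010y₁0y₂0y₃…`, the `i`-th
repetition of `E_d` outputs exactly `y_i`, and the seed after `i + 1` repetitions
is `x⁽ⁱ⁺¹⁾ = 0y_{i+1}0y_{i+2}…` (all indices 0-based). -/
theorem experiment_outputs (y x0 : ℕ → Bool)
    (hx : ∀ n, x0 n = if n = 0 then false else if n = 1 then true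
      else if n % 2 = 1 then y ((n - 3) / 2) else false) :
    ∀ i, output (seeds x0 i) = y i ∧
      (∀ n, seeds x0 (i + 1) n = if n % 2 = 1 then y ((n - 1) / 2 + i) else false) := by
  intro i
  induction i with
  | zero =>
    have h2 : x0 2 = false := by rw [hx]; norm_num
    have hk := leastK_eq_two x0 h2
    constructor
    · show output x0 = y 0
      rw [output, hk, hx]; norm_num
    · intro n
      show nextSeed x0 n = _
      rw [nextSeed, hk, d_two, hx]
      have e : (n + 2) % 2 = n % 2 := by omega
      by_cases hn : n % 2 = 1
      · have e2 : (n + 2 - 3) / 2 = (n - 1) / 2 + 0 := by omega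
        have h0 : n + 2 ≠ 0 := by omega
        have h1 : n + 2 ≠ 1 := by omega
        simp [e, hn, e2, h0, h1]
      · have h0 : n + 2 ≠ 0 := by omega
        have h1 : n + 2 ≠ 1 := by omega
        simp [e, hn, h0, h1]
  | succ i ih =>
    obtain ⟨-, hs⟩ := ih
    have h := step_lemma y (seeds x0 (i + 1)) i hs
    refine ⟨h.1, fun n => ?_⟩
    have : seeds x0 (i + 1 + 1) = nextSeed (seeds x0 (i + 1)) := by
      rw [seeds, seeds, Function.iterate_succ', Function.comp_apply]
    rw [this, h.2 n]
end
end
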